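/- Let G be a finite simple graph with d_c(G) ≥ 1. Then there exists an independent set S₀ with d(S₀) > 0 and |S₀| ≤ |ker(G)| − d_c(G) + 1; that is, min{|S₀| : S₀ independent, d(S₀) > 0} ≤ |ker(G)| − d_c(G) + 1. -/

import Mathlib

open Finset

namespace CritGraph

variable {V : Type*} [Fintype V] [DecidableEq V]

/-- The neighborhood of a set of vertices `X`:
all vertices having at least one neighbor in `X`. -/
def nbhd (G : SimpleGraph V) [DecidableRel G.Adj] (X : Finset V) : Finset V :=
  univ.filter fun v => ∃ x ∈ X, G.Adj v x

/-- The difference `d(X) = |X| - |N(X)|` of a set of vertices `X`. -/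
def diff (G : SimpleGraph V) [DecidableRel G.Adj] (X : Finset V) : ℤ :=
  (X.card : ℤ) - ((nbhd G X).card : ℤ)

/-- A set of vertices is independent if no two of its vertices are adjacent. -/
def IsIndep (G : SimpleGraph V) (S : Finset V) : Prop :=
  ∀ u ∈ S, ∀ v ∈ S, ¬ G.Adj u v

instance (G : SimpleGraph V) [DecidableRel G.Adj] : DecidablePred (IsIndep G) := fun S =>
  inferInstanceAs (Decidable (∀ u ∈ S, ∀ v ∈ S, ¬ G.Adj u v))

/-- The critical difference `d_c(G) = max {d(X) : X ⊆ V}`. -/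
def dC (G : SimpleGraph V) [DecidableRel G.Adj] : ℤ :=
  (univ : Finset V).powerset.sup' (Finset.powerset_nonempty _) (diff G)

/-- The critical independence difference `id_c(G) = max {d(I) : I independent}`. -/
def idC (G : SimpleGraph V) [DecidableRel G.Adj] : ℤ :=
  ((univ : Finset V).powerset.filter (IsIndep G)).sup'
    ⟨∅, by simp [IsIndep]⟩ (diff G)

/-- `A` is a critical independent set: `A` is independent and
`d(A) = max {d(I) : I independent}`. -/
def IsCritIndep (G : SimpleGraph V) [DecidableRel G.Adj] (A : Finset V) : Prop :=
  IsIndep G A ∧ ∀ I : Finset V, IsIndep G I → diff G I ≤ diff G A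

instance (G : SimpleGraph V) [DecidableRel G.Adj] : DecidablePred (IsCritIndep G) := fun A =>
  inferInstanceAs (Decidable (IsIndep G A ∧ ∀ I : Finset V, IsIndep G I → diff G I ≤ diff G A))

/-- `ker(G)`: the intersection of all critical independent sets of `G`. -/
def kerG (G : SimpleGraph V) [DecidableRel G.Adj] : Finset V :=
  univ.filter fun v => ∀ A : Finset V, IsCritIndep G A → v ∈ A

/-- `G - v`: the induced subgraph of `G` on `V \ {v}`. -/
def deleteVert (G : SimpleGraph V) (v : V) : SimpleGraph {u : V // u ≠ v} :=
  G.comap Subtype.val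

instance (G : SimpleGraph V) (v : V) [DecidableRel G.Adj] :
    DecidableRel (deleteVert G v).Adj := fun a b =>
  inferInstanceAs (Decidable (G.Adj a.val b.val))

/-- `S` is an inclusion-minimal independent set with positive difference. -/
def MinPosIndep (G : SimpleGraph V) [DecidableRel G.Adj] (S : Finset V) : Prop :=
  IsIndep G S ∧ 0 < diff G S ∧ ∀ S' ⊂ S, ¬ (IsIndep G S' ∧ 0 < diff G S')

/-- `S` is a maximum independent set. -/
def IsMaxIndep (G : SimpleGraph V) (S : Finset V) : Prop :=
  IsIndep G S ∧ ∀ I : Finset V, IsIndep G I → I.card ≤ S.card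

instance (G : SimpleGraph V) [DecidableRel G.Adj] : DecidablePred (IsMaxIndep G) := fun S =>
  inferInstanceAs (Decidable (IsIndep G S ∧ ∀ I : Finset V, IsIndep G I → I.card ≤ S.card))

/-- `core(G)`: the intersection of all maximum independent sets of `G`. -/
def coreG (G : SimpleGraph V) [DecidableRel G.Adj] : Finset V :=
  univ.filter fun v => ∀ A : Finset V, IsMaxIndep G A → v ∈ A

/-!
The kernel is itself a critical independent set: `d` is supermodular, so the intersection of
two critical independent sets is again critical, and hence a critical independent set of minimum
size lies in every other one. Every critical independent set `A` has `d(A) = d_c(G)`, because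
`X ↦ X \ N(X)` turns any set into an independent one without decreasing `d`. Thus
`|N(ker G)| = |ker G| - d_c(G)`, and any `|N(ker G)| + 1` vertices of `ker G` form an independent
set whose neighbourhood is still inside `N(ker G)`, so its difference is positive.
-/

section

variable (G : SimpleGraph V) [DecidableRel G.Adj]

omit [DecidableEq V] in
@[simp]
lemma mem_nbhd {X : Finset V} {v : V} : v ∈ nbhd G X ↔ ∃ x ∈ X, G.Adj v x := by
  simp [nbhd]

omit [DecidableEq V] in
lemma nbhd_mono {X Y : Finset V} (h : X ⊆ Y) : nbhd G X ⊆ nbhd G Y := fun v hv => by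
  obtain ⟨x, hx, hadj⟩ := (mem_nbhd G).1 hv
  exact (mem_nbhd G).2 ⟨x, h hx, hadj⟩

lemma nbhd_union (A B : Finset V) : nbhd G (A ∪ B) = nbhd G A ∪ nbhd G B := by
  ext v
  simp only [mem_nbhd, mem_union, or_and_right, exists_or]

lemma nbhd_inter_subset (A B : Finset V) : nbhd G (A ∩ B) ⊆ nbhd G A ∩ nbhd G B :=
  subset_inter (nbhd_mono G inter_subset_left) (nbhd_mono G inter_subset_right)

omit [DecidableEq V] in
lemma diff_le_dC (X : Finset V) : diff G X ≤ dC G :=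
  le_sup' (diff G) (by simp)

lemma diff_add_diff_le_diff_inter_add_diff_union (A B : Finset V) :
    diff G A + diff G B ≤ diff G (A ∩ B) + diff G (A ∪ B) := by
  have hcard := card_union_add_card_inter A B
  have hNcard := card_union_add_card_inter (nbhd G A) (nbhd G B)
  have hNinter := card_le_card (nbhd_inter_subset G A B)
  unfold diff
  rw [nbhd_union]
  omega

omit [DecidableEq V] in
lemma diff_pos_of_subset_of_card_nbhd_lt {S X : Finset V} (hSX : S ⊆ X)
    (hcard : (nbhd G X).card < S.card) : 0 < diff G S := by
  have := card_le_card (nbhd_mono G hSX)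
  unfold diff
  omega

omit [Fintype V] [DecidableEq V] [DecidableRel G.Adj] in
lemma IsIndep.subset {S T : Finset V} (hT : IsIndep G T) (hST : S ⊆ T) : IsIndep G S :=
  fun u hu v hv => hT u (hST hu) v (hST hv)

lemma isIndep_sdiff_nbhd (X : Finset V) : IsIndep G (X \ nbhd G X) := by
  intro u hu v hv hadj
  rw [mem_sdiff] at hu hv
  exact hv.2 ((mem_nbhd G).2 ⟨u, hu.1, hadj.symm⟩)

lemma diff_le_diff_sdiff_nbhd (X : Finset V) : diff G X ≤ diff G (X \ nbhd G X) := by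
  have hsub : nbhd G (X \ nbhd G X) ⊆ nbhd G X \ X := by
    intro w hw
    obtain ⟨v, hv, hadj⟩ := (mem_nbhd G).1 hw
    rw [mem_sdiff] at hv ⊢
    exact ⟨(mem_nbhd G).2 ⟨v, hv.1, hadj⟩,
      fun hwX => hv.2 ((mem_nbhd G).2 ⟨w, hwX, hadj.symm⟩)⟩
  have := card_le_card hsub
  have := card_sdiff_add_card_inter X (nbhd G X)
  have := card_sdiff_add_card_inter (nbhd G X) X
  rw [inter_comm] at this
  unfold diff
  omega

lemma IsCritIndep.diff_eq_dC {A : Finset V} (hA : IsCritIndep G A) : diff G A = dC G := by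
  refine le_antisymm (diff_le_dC G A) ?_
  obtain ⟨X, -, hX⟩ := exists_mem_eq_sup' (powerset_nonempty (univ : Finset V)) (diff G)
  calc dC G = diff G X := hX
    _ ≤ diff G (X \ nbhd G X) := diff_le_diff_sdiff_nbhd G X
    _ ≤ diff G A := hA.2 _ (isIndep_sdiff_nbhd G X)

lemma exists_isCritIndep : ∃ A, IsCritIndep G A := by
  obtain ⟨A, hA, hmax⟩ :=
    exists_max_image (univ.filter (IsIndep G)) (diff G) ⟨∅, by simp [IsIndep]⟩
  exact ⟨A, (mem_filter.1 hA).2, fun I hI => hmax I (by simpa using hI)⟩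

lemma IsCritIndep.inter {A B : Finset V} (hA : IsCritIndep G A) (hB : IsCritIndep G B) :
    IsCritIndep G (A ∩ B) := by
  have hsupermod := diff_add_diff_le_diff_inter_add_diff_union G A B
  have hunion := diff_le_dC G (A ∪ B)
  rw [hA.diff_eq_dC, hB.diff_eq_dC] at hsupermod
  refine ⟨hA.1.subset G inter_subset_left, fun I hI => ?_⟩
  have := hA.2 I hI
  rw [hA.diff_eq_dC] at this
  omega

lemma isCritIndep_kerG : IsCritIndep G (kerG G) := by
  obtain ⟨A, hA⟩ := exists_isCritIndep G
  obtain ⟨A₀, hA₀, hmin⟩ :=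
    exists_min_image (univ.filter (IsCritIndep G)) card ⟨A, mem_filter.2 ⟨mem_univ A, hA⟩⟩
  replace hA₀ : IsCritIndep G A₀ := (mem_filter.1 hA₀).2
  have hsub : ∀ B, IsCritIndep G B → A₀ ⊆ B := fun B hB => by
    have hcard := hmin _ (by simpa using hA₀.inter G hB)
    rw [← eq_of_subset_of_card_le inter_subset_left hcard]
    exact inter_subset_right
  have hker : kerG G = A₀ := by
    ext v
    simp only [kerG, mem_filter, mem_univ, true_and]
    exact ⟨fun hv => hv A₀ hA₀, fun hv B hB => hsub B hB hv⟩
  exact hker ▸ hA₀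

end

/-- If `d_c(G) ≥ 1`, then there is an independent set `S₀` with `d(S₀) > 0` and
`|S₀| ≤ |ker(G)| - d_c(G) + 1`. -/
theorem exists_small_posdiff_indep (G : SimpleGraph V) [DecidableRel G.Adj]
    (h : 1 ≤ dC G) :
    ∃ S₀ : Finset V, IsIndep G S₀ ∧ 0 < diff G S₀ ∧
      (S₀.card : ℤ) ≤ ((kerG G).card : ℤ) - dC G + 1 := by
  have hker := isCritIndep_kerG G
  have hdiff : diff G (kerG G) = dC G := hker.diff_eq_dC
  unfold diff at hdiff
  obtain ⟨S₀, hS₀, hcard⟩ :=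
    exists_subset_card_eq (s := kerG G) (n := (nbhd G (kerG G)).card + 1) (by omega)
  refine ⟨S₀, hker.1.subset G hS₀,
    diff_pos_of_subset_of_card_nbhd_lt G hS₀ (by omega), by omega⟩

end CritGraph
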